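/- If R is a Noetherian ring, then every irreducible graded submodule P of M with (P :_R M) ∩ S = ∅ is a graded classical S-primary submodule of M. -/

import Mathlib

/-! Over a Noetherian ring the ascending chain of ideals `(P : yⁿm)` stabilises, say
`(P : yⁿ⁺¹m) = (P : yⁿm)`. If `xy • m ∈ P`, then `P = (P + R xm) ∩ (P + R yⁿm)`: an element
`p + a xm = p' + b yⁿm` of the intersection, multiplied by `y`, shows `b yⁿ⁺¹m ∈ P`, hence
`b yⁿm ∈ P`. Irreducibility then forces `xm ∈ P` or `yⁿm ∈ P`, so `s = 1` witnesses the graded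
classical `S`-primary condition. -/

variable {G : Type*} [AddCommGroup G] [DecidableEq G]
variable {R : Type*} [CommRing R] (𝒜 : G → AddSubmonoid R) [GradedRing 𝒜]
variable {M : Type*} [AddCommGroup M] [Module R M]
variable (ℳ : G → AddSubmonoid M) [SetLike.GradedSMul 𝒜 ℳ] [DirectSum.Decomposition ℳ]

/-- `P` is a graded submodule of the graded module `M`. -/
def IsGradedSubmodule (P : Submodule R M) : Prop :=
  ∀ m ∈ P, ∀ g : G, (DirectSum.decompose ℳ m g : M) ∈ P

/-- `P` is a graded classical primary submodule of `M`. -/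
def IsGrClPrimary (P : Submodule R M) : Prop :=
  IsGradedSubmodule ℳ P ∧ P ≠ ⊤ ∧
    ∀ x y : R, ∀ m : M, SetLike.IsHomogeneousElem 𝒜 x → SetLike.IsHomogeneousElem 𝒜 y →
      SetLike.IsHomogeneousElem ℳ m → (x * y) • m ∈ P →
        x • m ∈ P ∨ ∃ n : ℕ, 0 < n ∧ y ^ n • m ∈ P

/-- `P` is a graded classical `S`-primary submodule of `M`;
this includes the requirement `(P :_R M) ∩ S = ∅`. -/
def IsGrClSPrimary (S : Submonoid R) (P : Submodule R M) : Prop :=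
  IsGradedSubmodule ℳ P ∧ Disjoint ((P.colon ⊤ : Ideal R) : Set R) (S : Set R) ∧
    ∃ s ∈ S, ∀ x y : R, ∀ m : M, SetLike.IsHomogeneousElem 𝒜 x → SetLike.IsHomogeneousElem 𝒜 y →
      SetLike.IsHomogeneousElem ℳ m → (x * y) • m ∈ P →
        (s * x) • m ∈ P ∨ ∃ n : ℕ, 0 < n ∧ (s * y ^ n) • m ∈ P

namespace Submodule

theorem colon_pow_smul_le_succ (P : Submodule R M) (y : R) (m : M) (n : ℕ) :
    P.colon {y ^ n • m} ≤ P.colon {y ^ (n + 1) • m} := by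
  intro r hr
  rw [mem_colon_singleton] at hr ⊢
  rw [pow_succ', mul_smul, smul_comm r y]
  exact P.smul_mem y hr

theorem eventually_colon_pow_smul_stable [IsNoetherianRing R] (P : Submodule R M) (y : R)
    (m : M) : ∀ᶠ n in Filter.atTop, ∀ b : R, b • y ^ (n + 1) • m ∈ P → b • y ^ n • m ∈ P := by
  obtain ⟨n, hn⟩ := monotone_stabilizes_iff_noetherian.mpr (inferInstance : IsNoetherianRing R)
    ⟨fun n ↦ P.colon {y ^ n • m}, monotone_nat_of_le_succ (colon_pow_smul_le_succ P y m)⟩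
  refine Filter.eventually_atTop.mpr ⟨n, fun k hk b hb ↦ ?_⟩
  have hcolon : P.colon {y ^ k • m} = P.colon {y ^ (k + 1) • m} :=
    (hn k hk).symm.trans (hn (k + 1) (hk.trans k.le_succ))
  rwa [← mem_colon_singleton, hcolon, mem_colon_singleton]

theorem eq_sup_span_inf_sup_span_of_colon_stable {P : Submodule R M} {x y : R} {m : M} {n : ℕ}
    (hxy : (x * y) • m ∈ P) (hn : ∀ b : R, b • y ^ (n + 1) • m ∈ P → b • y ^ n • m ∈ P) :
    P = (P ⊔ span R {x • m}) ⊓ (P ⊔ span R {y ^ n • m}) := by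
  refine le_antisymm (le_inf le_sup_left le_sup_left) fun u hu ↦ ?_
  simp only [mem_inf, mem_sup, mem_span_singleton] at hu
  obtain ⟨⟨p, hp, _, ⟨a, rfl⟩, rfl⟩, ⟨p', hp', _, ⟨b, rfl⟩, hu⟩⟩ := hu
  have hyu : y • (p + a • x • m) ∈ P := by
    rw [smul_add, smul_comm y a, smul_smul y x, mul_comm y x]
    exact P.add_mem (P.smul_mem y hp) (P.smul_mem a hxy)
  have hb : b • y ^ (n + 1) • m ∈ P := by
    have h : y • (p' + b • y ^ n • m) - y • p' ∈ P := P.sub_mem (hu ▸ hyu) (P.smul_mem y hp')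
    rw [smul_add, add_sub_cancel_left, smul_comm y b] at h
    rwa [pow_succ', mul_smul]
  rw [← hu]
  exact P.add_mem hp' (hn b hb)

theorem smul_mem_or_pow_smul_mem_of_irreducible [IsNoetherianRing R] {P : Submodule R M}
    (hirr : ∀ A B : Submodule R M, P = A ⊓ B → P = A ∨ P = B) {x y : R} {m : M}
    (hxy : (x * y) • m ∈ P) : x • m ∈ P ∨ ∃ n : ℕ, 0 < n ∧ y ^ n • m ∈ P := by
  obtain ⟨n, hn, hpos⟩ :=
    ((P.eventually_colon_pow_smul_stable y m).and (Filter.eventually_gt_atTop 0)).exists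
  have hx : x • m ∈ P ⊔ span R {x • m} := mem_sup_right (mem_span_singleton_self _)
  have hy : y ^ n • m ∈ P ⊔ span R {y ^ n • m} := mem_sup_right (mem_span_singleton_self _)
  rcases hirr _ _ (eq_sup_span_inf_sup_span_of_colon_stable hxy hn) with h | h
  · exact .inl (h ▸ hx)
  · exact .inr ⟨n, hpos, h ▸ hy⟩

end Submodule

theorem irreducible_isGrClSPrimary [IsNoetherianRing R] (S : Submonoid R)
    (P : Submodule R M)
    (hgr : IsGradedSubmodule ℳ P)
    (hirr : ∀ A B : Submodule R M, P = A ⊓ B → P = A ∨ P = B)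
    (hdisj : Disjoint ((P.colon ⊤ : Ideal R) : Set R) (S : Set R)) :
    IsGrClSPrimary 𝒜 ℳ S P := by
  refine ⟨hgr, hdisj, 1, S.one_mem, fun x y m _ _ _ hxy ↦ ?_⟩
  simpa only [one_mul] using P.smul_mem_or_pow_smul_mem_of_irreducible hirr hxy
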